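/- arXiv:2602.15239 — 6 statements merged into one kernel-verified Lean document; each statement's English description precedes it below -/
import Mathlib

section
/- Let x_i, x_j, y be points of X with dist(x_j, y) ≤ r for some r > 0, and let M ∈ ℝ satisfy ⟨Q f(u), K f(v)⟩ ≤ M for all u, v ∈ X. Then the exponential attention coefficients satisfy |exp(⟨Q f(x_i), K f(x_j)⟩) − exp(⟨Q f(x_i), K f(y)⟩)| ≤ exp(M) · B_f · C_Q · C_K · r. -/
open scoped RealInnerProductSpace BigOperators

lemma exp_sub_exp_le {a b M : ℝ} (ha : a ≤ M) (hb : b ≤ M) :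
    |Real.exp a - Real.exp b| ≤ Real.exp M * |a - b| := by
  wlog h : b ≤ a generalizing a b
  · rw [abs_sub_comm, abs_sub_comm a b]
    exact this hb ha (le_of_not_ge h)
  rw [abs_of_nonneg (sub_nonneg.2 (Real.exp_le_exp.2 h)), abs_of_nonneg (sub_nonneg.2 h)]
  have key : Real.exp a - Real.exp b ≤ (a - b) * Real.exp a := by
    have h1 : 1 - (a - b) ≤ Real.exp (-(a - b)) := by
      have := Real.add_one_le_exp (-(a - b)); linarith
    have h2 : Real.exp b = Real.exp a * Real.exp (-(a - b)) := by
      rw [← Real.exp_add]; ring_nf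
    nlinarith [Real.exp_pos a, Real.exp_pos b]
  calc Real.exp a - Real.exp b ≤ (a - b) * Real.exp a := key
    _ ≤ (a - b) * Real.exp M := by
        exact mul_le_mul_of_nonneg_left (Real.exp_le_exp.2 ha) (sub_nonneg.2 h)
    _ = Real.exp M * (a - b) := by ring

/-- For points `xi, xj, y` of `X` with `dist xj y ≤ r`, and `M` an upper bound
on all attention inner products, the exponential attention coefficients satisfy
`|exp⟨Q f(xi), K f(xj)⟩ − exp⟨Q f(xi), K f(y)⟩| ≤ exp(M) · B_f · C_Q · C_K · r`. -/
theorem attention_exp_coefficient_bound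
    {D : ℕ} {X : Type*} [MetricSpace X]
    (Q K : EuclideanSpace ℝ (Fin D) →ₗ[ℝ] EuclideanSpace ℝ (Fin D))
    (C_Q C_K B_f r : ℝ) (hCQ : 0 < C_Q) (hCK : 0 < C_K) (hBf : 0 < B_f) (hr : 0 < r)
    (hQ : ∀ u, ‖Q u‖ ≤ C_Q * ‖u‖) (hK : ∀ u, ‖K u‖ ≤ C_K * ‖u‖)
    (f : X → EuclideanSpace ℝ (Fin D))
    (hfLip : ∀ a b, ‖f a - f b‖ ≤ dist a b)
    (hfB : ∀ x, ‖f x‖ ≤ B_f)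
    (M : ℝ) (hM : ∀ u v : X, ⟪Q (f u), K (f v)⟫ ≤ M)
    (xi xj y : X) (hxy : dist xj y ≤ r) :
    abs (Real.exp ⟪Q (f xi), K (f xj)⟫ - Real.exp ⟪Q (f xi), K (f y)⟫)
      ≤ Real.exp M * B_f * C_Q * C_K * r := by
  have hdiff : |⟪Q (f xi), K (f xj)⟫ - ⟪Q (f xi), K (f y)⟫| ≤ B_f * C_Q * C_K * r := by
    have h1 : ⟪Q (f xi), K (f xj)⟫ - ⟪Q (f xi), K (f y)⟫
        = ⟪Q (f xi), K (f xj - f y)⟫ := by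
      rw [map_sub, inner_sub_right]
    rw [h1]
    calc |⟪Q (f xi), K (f xj - f y)⟫| ≤ ‖Q (f xi)‖ * ‖K (f xj - f y)‖ :=
          abs_real_inner_le_norm _ _
      _ ≤ (C_Q * ‖f xi‖) * (C_K * ‖f xj - f y‖) := by
          apply mul_le_mul (hQ _) (hK _) (norm_nonneg _)
          positivity
      _ ≤ (C_Q * B_f) * (C_K * r) := by
          apply mul_le_mul _ _ (by positivity) (by positivity)
          · exact mul_le_mul_of_nonneg_left (hfB _) hCQ.le
          · exact mul_le_mul_of_nonneg_left ((hfLip _ _).trans hxy) hCK.le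
      _ = B_f * C_Q * C_K * r := by ring
  calc abs (Real.exp ⟪Q (f xi), K (f xj)⟫ - Real.exp ⟪Q (f xi), K (f y)⟫)
      ≤ Real.exp M * |⟪Q (f xi), K (f xj)⟫ - ⟪Q (f xi), K (f y)⟫| :=
        exp_sub_exp_le (hM _ _) (hM _ _)
    _ ≤ Real.exp M * (B_f * C_Q * C_K * r) :=
        mul_le_mul_of_nonneg_left hdiff (Real.exp_pos _).le
    _ = Real.exp M * B_f * C_Q * C_K * r := by ring
end

section
/- Let x_1, …, x_N ∈ X, let X_1, …, X_N ∈ ℝ^D satisfy ‖X_j − f(x_j)‖ ≤ Δ and ‖X_j‖ ≤ 1 for all j, assume ‖f(x)‖ ≤ 1 for all x ∈ X, and let M ≥ 0 satisfy |⟨Q X_i, K X_j⟩| ≤ M and |⟨Q f(x_i), K f(x_j)⟩| ≤ M for all i, j. Then for every index i, the softmax attention outputs satisfy ‖Φ_G(i) − Φ̄(i)‖ ≤ (C_V + 4·exp(2M)·C_Q·C_K·C_V) · Δ. -/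
open scoped RealInnerProductSpace BigOperators

/-- Helper: Lipschitz bound for `exp` on `[-M, M]`. -/
lemma exp_diff_le_of_abs_le {s t M : ℝ} (hs : |s| ≤ M) (ht : |t| ≤ M) :
    |Real.exp s - Real.exp t| ≤ Real.exp M * |s - t| := by
  have key : ∀ u v : ℝ, u ≤ v → |v| ≤ M →
      Real.exp v - Real.exp u ≤ Real.exp M * (v - u) := by
    intro u v huv hv
    have h1 : (u - v) + 1 ≤ Real.exp (u - v) := Real.add_one_le_exp _
    have h2 : Real.exp v * Real.exp (u - v) = Real.exp u := by
      rw [← Real.exp_add]; ring_nf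
    have h3 : Real.exp v * ((u - v) + 1) ≤ Real.exp u := by
      calc Real.exp v * ((u - v) + 1) ≤ Real.exp v * Real.exp (u - v) := by
            exact mul_le_mul_of_nonneg_left h1 (Real.exp_pos v).le
        _ = Real.exp u := h2
    have h4 : Real.exp v ≤ Real.exp M := Real.exp_le_exp.mpr (le_of_abs_le hv)
    nlinarith [Real.exp_pos v, Real.exp_pos u]
  rcases le_total s t with h | h
  · have := key s t h ht
    rw [abs_sub_comm, abs_of_nonneg (sub_nonneg.mpr (Real.exp_le_exp.mpr h)),
      abs_sub_comm, abs_of_nonneg (sub_nonneg.mpr h)]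
    linarith
  · have := key t s h hs
    rw [abs_of_nonneg (sub_nonneg.mpr (Real.exp_le_exp.mpr h)),
      abs_of_nonneg (sub_nonneg.mpr h)]
    linarith

lemma div_sub_div_decomp (A B S T : ℝ) (hS : S ≠ 0) (hT : T ≠ 0) :
    A / S - B / T = (A - B) / S + (B / T) * ((T - S) / S) := by
  field_simp; ring

set_option maxHeartbeats 1000000 in
/-- The softmax attention output computed from the perturbed features `Xv j`
differs from the clean attention output computed from `f (x j)` by at most
`(C_V + 4·exp(2M)·C_Q·C_K·C_V) · Δ`. -/
theorem graph_attention_pe_perturbation_bound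
    {D : ℕ} {X : Type*} [MetricSpace X]
    (Q K V : EuclideanSpace ℝ (Fin D) →ₗ[ℝ] EuclideanSpace ℝ (Fin D))
    (C_Q C_K C_V Δ : ℝ) (hCQ : 0 < C_Q) (hCK : 0 < C_K) (hCV : 0 < C_V) (hΔ : 0 ≤ Δ)
    (hQ : ∀ u, ‖Q u‖ ≤ C_Q * ‖u‖) (hK : ∀ u, ‖K u‖ ≤ C_K * ‖u‖)
    (hV : ∀ u, ‖V u‖ ≤ C_V * ‖u‖)
    (f : X → EuclideanSpace ℝ (Fin D))
    (hfLip : ∀ a b, ‖f a - f b‖ ≤ dist a b)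
    (hf1 : ∀ a : X, ‖f a‖ ≤ 1)
    (N : ℕ) (x : Fin N → X) (Xv : Fin N → EuclideanSpace ℝ (Fin D))
    (hXv : ∀ j, ‖Xv j - f (x j)‖ ≤ Δ) (hXv1 : ∀ j, ‖Xv j‖ ≤ 1)
    (M : ℝ) (hM0 : 0 ≤ M)
    (hM1 : ∀ i j, abs ⟪Q (Xv i), K (Xv j)⟫ ≤ M)
    (hM2 : ∀ i j, abs ⟪Q (f (x i)), K (f (x j))⟫ ≤ M)
    (i : Fin N) :
    ‖(∑ j, Real.exp ⟪Q (Xv i), K (Xv j)⟫)⁻¹ •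
        (∑ j, Real.exp ⟪Q (Xv i), K (Xv j)⟫ • V (Xv j)) -
      (∑ j, Real.exp ⟪Q (f (x i)), K (f (x j))⟫)⁻¹ •
        (∑ j, Real.exp ⟪Q (f (x i)), K (f (x j))⟫ • V (f (x j)))‖
      ≤ (C_V + 4 * Real.exp (2 * M) * C_Q * C_K * C_V) * Δ := by
  classical
  have : Nonempty (Fin N) := ⟨i⟩
  have hN : 0 < N := Fin.pos i
  set a : Fin N → ℝ := fun j => Real.exp ⟪Q (Xv i), K (Xv j)⟫ with ha
  set b : Fin N → ℝ := fun j => Real.exp ⟪Q (f (x i)), K (f (x j))⟫ with hb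
  set S : ℝ := ∑ j, a j with hS
  set T : ℝ := ∑ j, b j with hT
  set ε : ℝ := 2 * C_Q * C_K * Δ with hε
  -- score difference bound
  have hscore : ∀ j, |⟪Q (Xv i), K (Xv j)⟫ - ⟪Q (f (x i)), K (f (x j))⟫| ≤ ε := by
    intro j
    have e1 : ⟪Q (Xv i), K (Xv j)⟫ - ⟪Q (f (x i)), K (f (x j))⟫
        = ⟪Q (Xv i - f (x i)), K (Xv j)⟫ + ⟪Q (f (x i)), K (Xv j - f (x j))⟫ := by
      rw [map_sub, map_sub, inner_sub_left, inner_sub_right]; ring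
    rw [e1]
    have c1 : |⟪Q (Xv i - f (x i)), K (Xv j)⟫| ≤ (C_Q * Δ) * (C_K * 1) := by
      refine (abs_real_inner_le_norm _ _).trans ?_
      have h1 : ‖Q (Xv i - f (x i))‖ ≤ C_Q * Δ :=
        (hQ _).trans (mul_le_mul_of_nonneg_left (hXv i) hCQ.le)
      have h2 : ‖K (Xv j)‖ ≤ C_K * 1 :=
        (hK _).trans (mul_le_mul_of_nonneg_left (hXv1 j) hCK.le)
      exact mul_le_mul h1 h2 (norm_nonneg _) (by positivity)
    have c2 : |⟪Q (f (x i)), K (Xv j - f (x j))⟫| ≤ (C_Q * 1) * (C_K * Δ) := by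
      refine (abs_real_inner_le_norm _ _).trans ?_
      have h1 : ‖Q (f (x i))‖ ≤ C_Q * 1 :=
        (hQ _).trans (mul_le_mul_of_nonneg_left (hf1 _) hCQ.le)
      have h2 : ‖K (Xv j - f (x j))‖ ≤ C_K * Δ :=
        (hK _).trans (mul_le_mul_of_nonneg_left (hXv j) hCK.le)
      exact mul_le_mul h1 h2 (norm_nonneg _) (by positivity)
    calc |⟪Q (Xv i - f (x i)), K (Xv j)⟫ + ⟪Q (f (x i)), K (Xv j - f (x j))⟫|
        ≤ |⟪Q (Xv i - f (x i)), K (Xv j)⟫| + |⟪Q (f (x i)), K (Xv j - f (x j))⟫| := abs_add_le _ _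
      _ ≤ (C_Q * Δ) * (C_K * 1) + (C_Q * 1) * (C_K * Δ) := add_le_add c1 c2
      _ = ε := by rw [hε]; ring
  have hab : ∀ j, |a j - b j| ≤ Real.exp M * ε := by
    intro j
    calc |a j - b j| ≤ Real.exp M * |⟪Q (Xv i), K (Xv j)⟫ - ⟪Q (f (x i)), K (f (x j))⟫| :=
          exp_diff_le_of_abs_le (hM1 i j) (hM2 i j)
      _ ≤ Real.exp M * ε := mul_le_mul_of_nonneg_left (hscore j) (Real.exp_pos M).le
  have hapos : ∀ j, 0 < a j := fun j => Real.exp_pos _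
  have hbpos : ∀ j, 0 < b j := fun j => Real.exp_pos _
  have haLB : ∀ j, Real.exp (-M) ≤ a j := by
    intro j; exact Real.exp_le_exp.mpr (neg_le_of_abs_le (hM1 i j))
  have hSLB : (N : ℝ) * Real.exp (-M) ≤ S := by
    calc (N : ℝ) * Real.exp (-M) = ∑ _j : Fin N, Real.exp (-M) := by
          rw [Finset.sum_const, Finset.card_univ, Fintype.card_fin, nsmul_eq_mul]
      _ ≤ S := Finset.sum_le_sum fun j _ => haLB j
  have hSpos : 0 < S := lt_of_lt_of_le (by positivity) hSLB
  have hTpos : 0 < T := Finset.sum_pos (fun j _ => hbpos j) Finset.univ_nonempty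
  -- sum of |a - b|
  have habsum : ∑ j, |a j - b j| ≤ (N : ℝ) * (Real.exp M * ε) := by
    calc ∑ j, |a j - b j| ≤ ∑ _j : Fin N, Real.exp M * ε :=
          Finset.sum_le_sum fun j _ => hab j
      _ = (N : ℝ) * (Real.exp M * ε) := by
          rw [Finset.sum_const, Finset.card_univ, Fintype.card_fin, nsmul_eq_mul]
  have hTS : |T - S| ≤ ∑ j, |a j - b j| := by
    calc |T - S| = |∑ j, (b j - a j)| := by rw [hS, hT, ← Finset.sum_sub_distrib]
      _ ≤ ∑ j, |b j - a j| := Finset.abs_sum_le_sum_abs _ _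
      _ = ∑ j, |a j - b j| := by simp_rw [abs_sub_comm]
  -- total variation bound
  have hTV : ∑ j, |a j / S - b j / T| ≤ 4 * Real.exp (2 * M) * C_Q * C_K * Δ := by
    have step : ∀ j, |a j / S - b j / T| ≤ |a j - b j| / S + (b j / T) * (|T - S| / S) := by
      intro j
      have e1 : a j / S - b j / T = (a j - b j) / S + (b j / T) * ((T - S) / S) :=
        div_sub_div_decomp _ _ _ _ hSpos.ne' hTpos.ne'
      rw [e1]
      calc |(a j - b j) / S + (b j / T) * ((T - S) / S)|
          ≤ |(a j - b j) / S| + |(b j / T) * ((T - S) / S)| := abs_add_le _ _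
        _ = |a j - b j| / S + (b j / T) * (|T - S| / S) := by
            rw [abs_div, abs_mul, abs_div, abs_div, abs_of_pos hSpos, abs_of_pos hTpos,
              abs_of_pos (hbpos j)]
    have hbT : ∑ j, b j / T = 1 := by
      rw [← Finset.sum_div, ← hT, div_self hTpos.ne']
    calc ∑ j, |a j / S - b j / T|
        ≤ ∑ j, (|a j - b j| / S + (b j / T) * (|T - S| / S)) :=
          Finset.sum_le_sum fun j _ => step j
      _ = (∑ j, |a j - b j|) / S + (∑ j, b j / T) * (|T - S| / S) := by
          rw [Finset.sum_add_distrib, ← Finset.sum_div, ← Finset.sum_mul]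
      _ = (∑ j, |a j - b j|) / S + |T - S| / S := by rw [hbT, one_mul]
      _ ≤ (∑ j, |a j - b j|) / S + (∑ j, |a j - b j|) / S := by
          gcongr
      _ = 2 * ((∑ j, |a j - b j|) / S) := by ring
      _ ≤ 2 * (((N : ℝ) * (Real.exp M * ε)) / ((N : ℝ) * Real.exp (-M))) := by
          gcongr 2 * ?_
          exact div_le_div₀ (by positivity) habsum (by positivity) hSLB
      _ = 4 * Real.exp (2 * M) * C_Q * C_K * Δ := by
          have hNne : (N : ℝ) ≠ 0 := Nat.cast_ne_zero.mpr hN.ne'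
          have h2M : Real.exp (2 * M) = Real.exp M * Real.exp M := by
            rw [two_mul, Real.exp_add]
          rw [hε, Real.exp_neg, h2M]
          field_simp
          ring
  -- value perturbation bound
  have hvw : ∀ j, ‖V (Xv j) - V (f (x j))‖ ≤ C_V * Δ := by
    intro j
    rw [← map_sub]
    exact (hV _).trans (mul_le_mul_of_nonneg_left (hXv j) hCV.le)
  have hw : ∀ j, ‖V (f (x j))‖ ≤ C_V := by
    intro j
    calc ‖V (f (x j))‖ ≤ C_V * ‖f (x j)‖ := hV _
      _ ≤ C_V * 1 := mul_le_mul_of_nonneg_left (hf1 _) hCV.le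
      _ = C_V := mul_one _
  have haS : ∑ j, a j / S = 1 := by
    rw [← Finset.sum_div, ← hS, div_self hSpos.ne']
  -- decomposition
  have hdecomp : S⁻¹ • (∑ j, a j • V (Xv j)) - T⁻¹ • (∑ j, b j • V (f (x j)))
      = (∑ j, (a j / S) • (V (Xv j) - V (f (x j))))
        + (∑ j, (a j / S - b j / T) • V (f (x j))) := by
    rw [Finset.smul_sum, Finset.smul_sum, ← Finset.sum_sub_distrib, ← Finset.sum_add_distrib]
    refine Finset.sum_congr rfl fun j _ => ?_
    rw [smul_smul, smul_smul, smul_sub, sub_smul, div_eq_inv_mul, div_eq_inv_mul]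
    abel
  calc ‖S⁻¹ • (∑ j, a j • V (Xv j)) - T⁻¹ • (∑ j, b j • V (f (x j)))‖
      = ‖(∑ j, (a j / S) • (V (Xv j) - V (f (x j))))
          + (∑ j, (a j / S - b j / T) • V (f (x j)))‖ := by rw [hdecomp]
    _ ≤ ‖∑ j, (a j / S) • (V (Xv j) - V (f (x j)))‖
          + ‖∑ j, (a j / S - b j / T) • V (f (x j))‖ := norm_add_le _ _
    _ ≤ (∑ j, ‖(a j / S) • (V (Xv j) - V (f (x j)))‖)
          + (∑ j, ‖(a j / S - b j / T) • V (f (x j))‖) :=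
        add_le_add (norm_sum_le _ _) (norm_sum_le _ _)
    _ ≤ (∑ j, (a j / S) * (C_V * Δ)) + (∑ j, |a j / S - b j / T| * C_V) := by
        refine add_le_add (Finset.sum_le_sum fun j _ => ?_) (Finset.sum_le_sum fun j _ => ?_)
        · rw [norm_smul, Real.norm_eq_abs, abs_of_pos (div_pos (hapos j) hSpos)]
          exact mul_le_mul_of_nonneg_left (hvw j) (div_pos (hapos j) hSpos).le
        · rw [norm_smul, Real.norm_eq_abs]
          exact mul_le_mul_of_nonneg_left (hw j) (abs_nonneg _)
    _ = (∑ j, a j / S) * (C_V * Δ) + (∑ j, |a j / S - b j / T|) * C_V := by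
        rw [Finset.sum_mul, Finset.sum_mul]
    _ ≤ 1 * (C_V * Δ) + (4 * Real.exp (2 * M) * C_Q * C_K * Δ) * C_V := by
        rw [haS]
        exact add_le_add le_rfl (mul_le_mul_of_nonneg_right hTV hCV.le)
    _ = (C_V + 4 * Real.exp (2 * M) * C_Q * C_K * C_V) * Δ := by ring
end

section
/- Let x_1, …, x_N ∈ X, let X_1, …, X_N ∈ ℝ^D satisfy ‖X_j − f(x_j)‖ ≤ Δ and ‖X_j‖ ≤ 1 for all j, assume ‖f(x)‖ ≤ 1 for all x ∈ X, and let M ≥ 0 satisfy |⟨Q X_i, K X_j⟩| ≤ M and |⟨Q f(x_i), K f(x_j)⟩| ≤ M for all i, j. Then for every index i, the softmax denominators D_G = Σ_{j=1}^N exp(⟨Q X_i, K X_j⟩) and D̄ = Σ_{j=1}^N exp(⟨Q f(x_i), K f(x_j)⟩) satisfy |D̄ − D_G| ≤ 2·exp(2M)·C_Q·C_K·Δ · D_G. -/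
open scoped RealInnerProductSpace BigOperators

lemma exp_abs_sub_one_le (t : ℝ) : |Real.exp t - 1| ≤ |t| * Real.exp |t| := by
  rcases le_or_gt 0 t with ht | ht
  · rw [abs_of_nonneg ht, abs_of_nonneg (sub_nonneg.mpr (Real.one_le_exp ht))]
    have h := Real.add_one_le_exp (-t)
    have hmul : Real.exp (-t) * Real.exp t = 1 := by
      rw [← Real.exp_add]; simp
    nlinarith [mul_le_mul_of_nonneg_right h (Real.exp_pos t).le]
  · rw [abs_of_neg ht, abs_of_nonpos (by simp [Real.exp_le_one_iff.mpr ht.le] : Real.exp t - 1 ≤ 0)]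
    have h := Real.add_one_le_exp t
    nlinarith [Real.one_le_exp (neg_nonneg.mpr ht.le)]

lemma exp_diff_le {a b M : ℝ} (ha : |a| ≤ M) (hb : |b| ≤ M) :
    |Real.exp b - Real.exp a| ≤ Real.exp (2 * M) * Real.exp a * |b - a| := by
  have key : Real.exp b - Real.exp a = Real.exp a * (Real.exp (b - a) - 1) := by
    rw [mul_sub, ← Real.exp_add]; ring_nf
  have ht : |b - a| ≤ 2 * M := by
    calc |b - a| ≤ |b| + |a| := abs_sub _ _
      _ ≤ 2 * M := by linarith
  calc |Real.exp b - Real.exp a| = Real.exp a * |Real.exp (b - a) - 1| := by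
        rw [key, abs_mul, abs_of_pos (Real.exp_pos a)]
    _ ≤ Real.exp a * (|b - a| * Real.exp |b - a|) :=
        mul_le_mul_of_nonneg_left (exp_abs_sub_one_le _) (Real.exp_pos a).le
    _ ≤ Real.exp a * (|b - a| * Real.exp (2 * M)) :=
        mul_le_mul_of_nonneg_left
          (mul_le_mul_of_nonneg_left (Real.exp_le_exp.mpr ht) (abs_nonneg _))
          (Real.exp_pos a).le
    _ = Real.exp (2 * M) * Real.exp a * |b - a| := by ring

/-- The softmax denominators `D_G = Σ_j exp⟨Q Xi, K Xj⟩` and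
`D̄ = Σ_j exp⟨Q f(xi), K f(xj)⟩` satisfy `|D̄ − D_G| ≤ 2·exp(2M)·C_Q·C_K·Δ · D_G`. -/
theorem softmax_denominator_perturbation_bound
    {D : ℕ} {X : Type*} [MetricSpace X]
    (Q K : EuclideanSpace ℝ (Fin D) →ₗ[ℝ] EuclideanSpace ℝ (Fin D))
    (C_Q C_K Δ : ℝ) (hCQ : 0 < C_Q) (hCK : 0 < C_K) (hΔ : 0 ≤ Δ)
    (hQ : ∀ u, ‖Q u‖ ≤ C_Q * ‖u‖) (hK : ∀ u, ‖K u‖ ≤ C_K * ‖u‖)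
    (f : X → EuclideanSpace ℝ (Fin D))
    (hfLip : ∀ a b, ‖f a - f b‖ ≤ dist a b)
    (hf1 : ∀ a : X, ‖f a‖ ≤ 1)
    (N : ℕ) (x : Fin N → X) (Xv : Fin N → EuclideanSpace ℝ (Fin D))
    (hXv : ∀ j, ‖Xv j - f (x j)‖ ≤ Δ) (hXv1 : ∀ j, ‖Xv j‖ ≤ 1)
    (M : ℝ) (hM0 : 0 ≤ M)
    (hM1 : ∀ i j, abs ⟪Q (Xv i), K (Xv j)⟫ ≤ M)
    (hM2 : ∀ i j, abs ⟪Q (f (x i)), K (f (x j))⟫ ≤ M)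
    (i : Fin N) :
    abs ((∑ j, Real.exp ⟪Q (f (x i)), K (f (x j))⟫) -
         (∑ j, Real.exp ⟪Q (Xv i), K (Xv j)⟫))
      ≤ 2 * Real.exp (2 * M) * C_Q * C_K * Δ * (∑ j, Real.exp ⟪Q (Xv i), K (Xv j)⟫) := by
  have score : ∀ j : Fin N,
      |⟪Q (f (x i)), K (f (x j))⟫ - ⟪Q (Xv i), K (Xv j)⟫| ≤ 2 * C_Q * C_K * Δ := by
    intro j
    have hsplit : ⟪Q (f (x i)), K (f (x j))⟫ - ⟪Q (Xv i), K (Xv j)⟫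
        = ⟪Q (f (x i) - Xv i), K (f (x j))⟫ + ⟪Q (Xv i), K (f (x j) - Xv j)⟫ := by
      rw [map_sub, map_sub, inner_sub_left, inner_sub_right]; ring
    have h1 : |⟪Q (f (x i) - Xv i), K (f (x j))⟫| ≤ C_Q * Δ * C_K := by
      calc |⟪Q (f (x i) - Xv i), K (f (x j))⟫| ≤ ‖Q (f (x i) - Xv i)‖ * ‖K (f (x j))‖ :=
            abs_real_inner_le_norm _ _
        _ ≤ (C_Q * Δ) * (C_K * 1) := by
            apply mul_le_mul _ _ (norm_nonneg _) (by positivity)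
            · calc ‖Q (f (x i) - Xv i)‖ ≤ C_Q * ‖f (x i) - Xv i‖ := hQ _
                _ ≤ C_Q * Δ := by
                  have := hXv i
                  rw [← norm_neg (f (x i) - Xv i)] ; simp only [neg_sub]
                  exact mul_le_mul_of_nonneg_left this hCQ.le
            · calc ‖K (f (x j))‖ ≤ C_K * ‖f (x j)‖ := hK _
                _ ≤ C_K * 1 := mul_le_mul_of_nonneg_left (hf1 _) hCK.le
        _ = C_Q * Δ * C_K := by ring
    have h2 : |⟪Q (Xv i), K (f (x j) - Xv j)⟫| ≤ C_Q * Δ * C_K := by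
      calc |⟪Q (Xv i), K (f (x j) - Xv j)⟫| ≤ ‖Q (Xv i)‖ * ‖K (f (x j) - Xv j)‖ :=
            abs_real_inner_le_norm _ _
        _ ≤ (C_Q * 1) * (C_K * Δ) := by
            apply mul_le_mul _ _ (norm_nonneg _) (by positivity)
            · calc ‖Q (Xv i)‖ ≤ C_Q * ‖Xv i‖ := hQ _
                _ ≤ C_Q * 1 := mul_le_mul_of_nonneg_left (hXv1 _) hCQ.le
            · calc ‖K (f (x j) - Xv j)‖ ≤ C_K * ‖f (x j) - Xv j‖ := hK _
                _ ≤ C_K * Δ := by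
                  have := hXv j
                  rw [← norm_neg (f (x j) - Xv j)] ; simp only [neg_sub]
                  exact mul_le_mul_of_nonneg_left this hCK.le
        _ = C_Q * Δ * C_K := by ring
    calc |⟪Q (f (x i)), K (f (x j))⟫ - ⟪Q (Xv i), K (Xv j)⟫|
        ≤ |⟪Q (f (x i) - Xv i), K (f (x j))⟫| + |⟪Q (Xv i), K (f (x j) - Xv j)⟫| := by
          rw [hsplit]; exact abs_add_le _ _
      _ ≤ 2 * C_Q * C_K * Δ := by linarith
  have term : ∀ j : Fin N,
      |Real.exp ⟪Q (f (x i)), K (f (x j))⟫ - Real.exp ⟪Q (Xv i), K (Xv j)⟫|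
        ≤ 2 * Real.exp (2 * M) * C_Q * C_K * Δ * Real.exp ⟪Q (Xv i), K (Xv j)⟫ := by
    intro j
    calc |Real.exp ⟪Q (f (x i)), K (f (x j))⟫ - Real.exp ⟪Q (Xv i), K (Xv j)⟫|
        ≤ Real.exp (2 * M) * Real.exp ⟪Q (Xv i), K (Xv j)⟫ *
            |⟪Q (f (x i)), K (f (x j))⟫ - ⟪Q (Xv i), K (Xv j)⟫| :=
          exp_diff_le (hM1 i j) (hM2 i j)
      _ ≤ Real.exp (2 * M) * Real.exp ⟪Q (Xv i), K (Xv j)⟫ * (2 * C_Q * C_K * Δ) :=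
          mul_le_mul_of_nonneg_left (score j) (by positivity)
      _ = 2 * Real.exp (2 * M) * C_Q * C_K * Δ * Real.exp ⟪Q (Xv i), K (Xv j)⟫ := by ring
  calc abs ((∑ j, Real.exp ⟪Q (f (x i)), K (f (x j))⟫) -
         (∑ j, Real.exp ⟪Q (Xv i), K (Xv j)⟫))
      = |∑ j, (Real.exp ⟪Q (f (x i)), K (f (x j))⟫ - Real.exp ⟪Q (Xv i), K (Xv j)⟫)| := by
        rw [Finset.sum_sub_distrib]
    _ ≤ ∑ j, |Real.exp ⟪Q (f (x i)), K (f (x j))⟫ - Real.exp ⟪Q (Xv i), K (Xv j)⟫| :=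
        Finset.abs_sum_le_sum_abs _ _
    _ ≤ ∑ j, 2 * Real.exp (2 * M) * C_Q * C_K * Δ * Real.exp ⟪Q (Xv i), K (Xv j)⟫ :=
        Finset.sum_le_sum fun j _ => term j
    _ = 2 * Real.exp (2 * M) * C_Q * C_K * Δ * (∑ j, Real.exp ⟪Q (Xv i), K (Xv j)⟫) := by
        rw [Finset.mul_sum]
end

section
/- Let x_1, …, x_N ∈ X, let X_1, …, X_N ∈ ℝ^D satisfy ‖X_j − f(x_j)‖ ≤ Δ and ‖X_j‖ ≤ 1 for all j, assume ‖f(x)‖ ≤ 1 for all x ∈ X, and let M ≥ 0 satisfy |⟨Q X_i, K X_j⟩| ≤ M and |⟨Q f(x_i), K f(x_j)⟩| ≤ M for all i, j. Fix an index i and write γ_{ij} = exp(⟨Q X_i, K X_j⟩), γ̃_{ij} = exp(⟨Q f(x_i), K f(x_j)⟩), D_G = Σ_j γ_{ij}, D̄ = Σ_j γ̃_{ij}. Then ‖(1/(D_G·D̄)) · Σ_{j=1}^N (D̄·γ_{ij} − D_G·γ̃_{ij}) · V f(x_j)‖ ≤ 4·exp(2M)·C_Q·C_K·C_V·Δ.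 -/
open scoped RealInnerProductSpace BigOperators

lemma abs_exp_sub_exp_le {a b M : ℝ} (ha : |a| ≤ M) (hb : |b| ≤ M) :
    |Real.exp a - Real.exp b| ≤ Real.exp M * |a - b| := by
  wlog h : b ≤ a generalizing a b
  · have := this hb ha (le_of_not_ge h)
    rwa [abs_sub_comm, abs_sub_comm a b]
  have h1 : Real.exp a * (1 + (b - a)) ≤ Real.exp b := by
    have h2 := Real.add_one_le_exp (b - a)
    calc Real.exp a * (1 + (b - a)) ≤ Real.exp a * Real.exp (b - a) := by
          nlinarith [Real.exp_pos a]
      _ = Real.exp b := by rw [← Real.exp_add]; ring_nf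
  have hea : Real.exp a ≤ Real.exp M := Real.exp_le_exp.mpr (le_of_abs_le ha)
  rw [abs_of_nonneg (sub_nonneg.mpr (Real.exp_le_exp.mpr h)),
    abs_of_nonneg (sub_nonneg.mpr h)]
  nlinarith [Real.exp_pos a]

/-- With `γ_{ij} = exp⟨Q Xi, K Xj⟩`, `γ̃_{ij} = exp⟨Q f(xi), K f(xj)⟩`,
`D_G = Σ_j γ_{ij}` and `D̄ = Σ_j γ̃_{ij}`, the cross term satisfies
`‖(1/(D_G·D̄)) Σ_j (D̄·γ_{ij} − D_G·γ̃_{ij}) V f(x_j)‖ ≤ 4·exp(2M)·C_Q·C_K·C_V·Δ`. -/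
theorem attention_cross_term_bound
    {D : ℕ} {X : Type*} [MetricSpace X]
    (Q K V : EuclideanSpace ℝ (Fin D) →ₗ[ℝ] EuclideanSpace ℝ (Fin D))
    (C_Q C_K C_V Δ : ℝ) (hCQ : 0 < C_Q) (hCK : 0 < C_K) (hCV : 0 < C_V) (hΔ : 0 ≤ Δ)
    (hQ : ∀ u, ‖Q u‖ ≤ C_Q * ‖u‖) (hK : ∀ u, ‖K u‖ ≤ C_K * ‖u‖)
    (hV : ∀ u, ‖V u‖ ≤ C_V * ‖u‖)
    (f : X → EuclideanSpace ℝ (Fin D))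
    (hfLip : ∀ a b, ‖f a - f b‖ ≤ dist a b)
    (hf1 : ∀ a : X, ‖f a‖ ≤ 1)
    (N : ℕ) (x : Fin N → X) (Xv : Fin N → EuclideanSpace ℝ (Fin D))
    (hXv : ∀ j, ‖Xv j - f (x j)‖ ≤ Δ) (hXv1 : ∀ j, ‖Xv j‖ ≤ 1)
    (M : ℝ) (hM0 : 0 ≤ M)
    (hM1 : ∀ i j, abs ⟪Q (Xv i), K (Xv j)⟫ ≤ M)
    (hM2 : ∀ i j, abs ⟪Q (f (x i)), K (f (x j))⟫ ≤ M)
    (i : Fin N)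
    (DG Dbar : ℝ)
    (hDG : DG = ∑ j, Real.exp ⟪Q (Xv i), K (Xv j)⟫)
    (hDbar : Dbar = ∑ j, Real.exp ⟪Q (f (x i)), K (f (x j))⟫) :
    ‖(DG * Dbar)⁻¹ •
        ∑ j, (Dbar * Real.exp ⟪Q (Xv i), K (Xv j)⟫ -
              DG * Real.exp ⟪Q (f (x i)), K (f (x j))⟫) • V (f (x j))‖
      ≤ 4 * Real.exp (2 * M) * C_Q * C_K * C_V * Δ := by
  rcases Nat.eq_zero_or_pos N with hN | hN
  · subst hN
    simp only [Finset.univ_eq_empty, Finset.sum_empty, smul_zero, norm_zero] at *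
    positivity
  -- notation
  set s : Fin N → ℝ := fun j => ⟪Q (Xv i), K (Xv j)⟫ with hs
  set t : Fin N → ℝ := fun j => ⟪Q (f (x i)), K (f (x j))⟫ with ht
  have key : ∀ j, |s j - t j| ≤ 2 * C_Q * C_K * Δ := by
    intro j
    have h1 : s j - t j
        = ⟪Q (Xv i - f (x i)), K (Xv j)⟫ + ⟪Q (f (x i)), K (Xv j - f (x j))⟫ := by
      simp only [hs, ht, map_sub, inner_sub_left, inner_sub_right]
      ring
    have hA : |⟪Q (Xv i - f (x i)), K (Xv j)⟫| ≤ C_Q * Δ * C_K := by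
      calc |⟪Q (Xv i - f (x i)), K (Xv j)⟫| ≤ ‖Q (Xv i - f (x i))‖ * ‖K (Xv j)‖ :=
            abs_real_inner_le_norm _ _
        _ ≤ (C_Q * Δ) * (C_K * 1) := by
            apply mul_le_mul _ _ (norm_nonneg _) (by positivity)
            · exact le_trans (hQ _) (by nlinarith [hXv i])
            · exact le_trans (hK _) (by nlinarith [hXv1 j])
        _ = C_Q * Δ * C_K := by ring
    have hB : |⟪Q (f (x i)), K (Xv j - f (x j))⟫| ≤ C_Q * (C_K * Δ) := by
      calc |⟪Q (f (x i)), K (Xv j - f (x j))⟫| ≤ ‖Q (f (x i))‖ * ‖K (Xv j - f (x j))‖ :=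
            abs_real_inner_le_norm _ _
        _ ≤ (C_Q * 1) * (C_K * Δ) := by
            apply mul_le_mul _ _ (norm_nonneg _) (by positivity)
            · exact le_trans (hQ _) (by nlinarith [hf1 (x i)])
            · exact le_trans (hK _) (by nlinarith [hXv j])
        _ = C_Q * (C_K * Δ) := by ring
    calc |s j - t j| = |⟪Q (Xv i - f (x i)), K (Xv j)⟫ + ⟪Q (f (x i)), K (Xv j - f (x j))⟫| := by
          rw [h1]
      _ ≤ |⟪Q (Xv i - f (x i)), K (Xv j)⟫| + |⟪Q (f (x i)), K (Xv j - f (x j))⟫| := abs_add_le _ _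
      _ ≤ 2 * C_Q * C_K * Δ := by linarith
  set ε : ℝ := 2 * Real.exp M * C_Q * C_K * Δ with hε
  have hεnn : 0 ≤ ε := by positivity
  have hγ : ∀ j, |Real.exp (s j) - Real.exp (t j)| ≤ ε := by
    intro j
    calc |Real.exp (s j) - Real.exp (t j)| ≤ Real.exp M * |s j - t j| :=
          abs_exp_sub_exp_le (hM1 i j) (hM2 i j)
      _ ≤ Real.exp M * (2 * C_Q * C_K * Δ) := by
          exact mul_le_mul_of_nonneg_left (key j) (Real.exp_pos M).le
      _ = ε := by ring
  have htlb : ∀ j, Real.exp (-M) ≤ Real.exp (t j) :=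
    fun j => Real.exp_le_exp.mpr (neg_le_of_abs_le (hM2 i j))
  have hslb : ∀ j, Real.exp (-M) ≤ Real.exp (s j) :=
    fun j => Real.exp_le_exp.mpr (neg_le_of_abs_le (hM1 i j))
  have hDGlb : (N : ℝ) * Real.exp (-M) ≤ DG := by
    rw [hDG]
    calc (N : ℝ) * Real.exp (-M) = ∑ _j : Fin N, Real.exp (-M) := by
          simp [Finset.sum_const, mul_comm]
      _ ≤ ∑ j, Real.exp (s j) := Finset.sum_le_sum fun j _ => hslb j
  have hDbarlb : (N : ℝ) * Real.exp (-M) ≤ Dbar := by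
    rw [hDbar]
    calc (N : ℝ) * Real.exp (-M) = ∑ _j : Fin N, Real.exp (-M) := by
          simp [Finset.sum_const, mul_comm]
      _ ≤ ∑ j, Real.exp (t j) := Finset.sum_le_sum fun j _ => htlb j
  have hNpos : (0 : ℝ) < N := by exact_mod_cast hN
  have hDGpos : 0 < DG := lt_of_lt_of_le (by positivity) hDGlb
  have hDbarpos : 0 < Dbar := lt_of_lt_of_le (by positivity) hDbarlb
  have hDbar' : Dbar = ∑ j, Real.exp (t j) := hDbar
  have hDG' : DG = ∑ j, Real.exp (s j) := hDG
  have hDdiff : |Dbar - DG| ≤ (N : ℝ) * ε := by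
    rw [hDG', hDbar', ← Finset.sum_sub_distrib]
    calc |∑ j, (Real.exp (t j) - Real.exp (s j))| ≤ ∑ j, |Real.exp (t j) - Real.exp (s j)| :=
          Finset.abs_sum_le_sum_abs _ _
      _ ≤ ∑ _j : Fin N, ε := Finset.sum_le_sum fun j _ => by
          rw [abs_sub_comm]; exact hγ j
      _ = (N : ℝ) * ε := by simp [Finset.sum_const, mul_comm]
  have hcoef : ∀ j, |Dbar * Real.exp (s j) - DG * Real.exp (t j)|
      ≤ Dbar * ε + Real.exp (t j) * ((N : ℝ) * ε) := by
    intro j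
    have h1 : Dbar * Real.exp (s j) - DG * Real.exp (t j)
        = Dbar * (Real.exp (s j) - Real.exp (t j)) + Real.exp (t j) * (Dbar - DG) := by ring
    rw [h1]
    calc |Dbar * (Real.exp (s j) - Real.exp (t j)) + Real.exp (t j) * (Dbar - DG)|
        ≤ |Dbar * (Real.exp (s j) - Real.exp (t j))| + |Real.exp (t j) * (Dbar - DG)| :=
          abs_add_le _ _
      _ ≤ Dbar * ε + Real.exp (t j) * ((N : ℝ) * ε) := by
          rw [abs_mul, abs_mul, abs_of_pos hDbarpos, abs_of_pos (Real.exp_pos _)]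
          exact add_le_add (mul_le_mul_of_nonneg_left (hγ j) hDbarpos.le)
            (mul_le_mul_of_nonneg_left hDdiff (Real.exp_pos _).le)
  have hsum : ∑ j, |Dbar * Real.exp (s j) - DG * Real.exp (t j)| ≤ 2 * N * Dbar * ε := by
    calc ∑ j, |Dbar * Real.exp (s j) - DG * Real.exp (t j)|
        ≤ ∑ j, (Dbar * ε + Real.exp (t j) * ((N : ℝ) * ε)) :=
          Finset.sum_le_sum fun j _ => hcoef j
      _ = (N : ℝ) * (Dbar * ε) + Dbar * ((N : ℝ) * ε) := by
          rw [Finset.sum_add_distrib, Finset.sum_const, Finset.card_univ, Fintype.card_fin,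
            nsmul_eq_mul, ← Finset.sum_mul, ← hDbar']
      _ = 2 * N * Dbar * ε := by ring
  have hnorm : ‖∑ j, (Dbar * Real.exp (s j) - DG * Real.exp (t j)) • V (f (x j))‖
      ≤ 2 * N * Dbar * ε * C_V := by
    calc ‖∑ j, (Dbar * Real.exp (s j) - DG * Real.exp (t j)) • V (f (x j))‖
        ≤ ∑ j, ‖(Dbar * Real.exp (s j) - DG * Real.exp (t j)) • V (f (x j))‖ :=
          norm_sum_le _ _
      _ ≤ ∑ j, |Dbar * Real.exp (s j) - DG * Real.exp (t j)| * C_V := by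
          apply Finset.sum_le_sum
          intro j _
          rw [norm_smul, Real.norm_eq_abs]
          apply mul_le_mul_of_nonneg_left _ (abs_nonneg _)
          exact le_trans (hV _) (by nlinarith [hf1 (x j)])
      _ = (∑ j, |Dbar * Real.exp (s j) - DG * Real.exp (t j)|) * C_V := by
          rw [Finset.sum_mul]
      _ ≤ 2 * N * Dbar * ε * C_V := by
          exact mul_le_mul_of_nonneg_right hsum hCV.le
  rw [norm_smul, Real.norm_eq_abs, abs_inv, abs_of_pos (mul_pos hDGpos hDbarpos)]
  calc (DG * Dbar)⁻¹ * ‖∑ j, (Dbar * Real.exp (s j) - DG * Real.exp (t j)) • V (f (x j))‖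
      ≤ (DG * Dbar)⁻¹ * (2 * N * Dbar * ε * C_V) := by
        exact mul_le_mul_of_nonneg_left hnorm (by positivity)
    _ = 2 * N * ε * C_V / DG := by
        field_simp
    _ ≤ 2 * N * ε * C_V / ((N : ℝ) * Real.exp (-M)) := by
        apply div_le_div_of_nonneg_left (by positivity) (by positivity) hDGlb
    _ = 2 * Real.exp M * ε * C_V := by
        rw [Real.exp_neg]
        field_simp
    _ = 4 * Real.exp (2 * M) * C_Q * C_K * C_V * Δ := by
        rw [hε, show (2:ℝ) * M = M + M by ring, Real.exp_add]
        ring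
end

section
/- (Deterministic form of the paper's Theorem 3.1, pointwise convergence of graph transformers to manifold transformers.) Let μ be a Borel probability measure on X, let x_1, …, x_N ∈ X, and let V_1, …, V_N be pairwise disjoint Borel sets whose union is X, with V_j contained in the closed ball of radius r > 0 centered at x_j and μ(V_j) = 1/N for every j. Assume ‖f(x)‖ ≤ 1 for all x ∈ X, let X_1, …, X_N ∈ ℝ^D satisfy ‖X_j − f(x_j)‖ ≤ Δ and ‖X_j‖ ≤ 1 for all j, and let M ≥ 0 satisfy |⟨Q X_i, K X_j⟩| ≤ M for all i, j and |⟨Q f(u), K f(v)⟩| ≤ M for all u, v ∈ X. Then for every index i, ‖Φ_G(i) − Φ_M(x_i)‖ ≤ (C_V + 4·exp(2M)·C_Q·C_K·C_V)·Δ + (exp(M)·C_V + 2·exp(2M)·C_Q·C_K·C_V)·r. -/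
open MeasureTheory
open scoped RealInnerProductSpace BigOperators

/-!
Both attention maps are ratios `W⁻¹ • U` and `I⁻¹ • J` of a total weight and a weighted sum of
values. Each cell `P j` has mass `1/N` and lies in the `r`-ball around `x j`, so the normalized
graph sums `N⁻¹ ∑ⱼ` are Riemann sums of the manifold integrals over the partition: on `P j` the
attention weight differs from the kernel by at most `ε = exp M · C_Q C_K (2Δ + r)` (`exp` is
`exp M`-Lipschitz on `(-∞, M]`) and the value by at most `C_V (Δ + r)`. Hence `|I - W| ≤ ε` and
`‖U - J‖ ≤ W C_V (Δ + r) + C_V ε`; as `‖J‖ ≤ C_V I` and `W ≥ exp (-M)`, the two ratios differ by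
at most `C_V (Δ + r) + 2 exp M · C_V ε`.
-/

theorem abs_exp_sub_exp_le_exp_mul {x y M : ℝ} (hx : x ≤ M) (hy : y ≤ M) :
    |Real.exp x - Real.exp y| ≤ Real.exp M * |x - y| := by
  wlog hyx : y ≤ x generalizing x y
  · rw [abs_sub_comm, abs_sub_comm x]
    exact this hy hx (le_of_not_ge hyx)
  have hexp : Real.exp x - Real.exp y = Real.exp x * (1 - Real.exp (y - x)) := by
    rw [mul_sub, ← Real.exp_add, add_sub_cancel, mul_one]
  rw [abs_of_nonneg (sub_nonneg.2 (Real.exp_le_exp.2 hyx)), abs_of_nonneg (sub_nonneg.2 hyx), hexp]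
  have hlin : 1 - Real.exp (y - x) ≤ x - y := by linarith [Real.add_one_le_exp (y - x)]
  calc Real.exp x * (1 - Real.exp (y - x)) ≤ Real.exp x * (x - y) := by gcongr
    _ ≤ Real.exp M * (x - y) := by gcongr

theorem abs_inner_map_sub_inner_map_le {E F : Type*} [NormedAddCommGroup E] [NormedSpace ℝ E]
    [NormedAddCommGroup F] [InnerProductSpace ℝ F] (Q K : E →ₗ[ℝ] F) {C_Q C_K : ℝ}
    (hCQ : 0 ≤ C_Q) (hQ : ∀ u, ‖Q u‖ ≤ C_Q * ‖u‖) (hK : ∀ u, ‖K u‖ ≤ C_K * ‖u‖)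
    (u u' v v' : E) :
    |⟪Q u, K v⟫ - ⟪Q u', K v'⟫| ≤ C_Q * C_K * (‖u‖ * ‖v - v'‖ + ‖u - u'‖ * ‖v'‖) := by
  have hsplit : ⟪Q u, K v⟫ - ⟪Q u', K v'⟫ = ⟪Q u, K (v - v')⟫ + ⟪Q (u - u'), K v'⟫ := by
    simp only [map_sub, inner_sub_left, inner_sub_right]; ring
  have hbound : ∀ s t, |⟪Q s, K t⟫| ≤ C_Q * C_K * (‖s‖ * ‖t‖) := fun s t =>
    calc |⟪Q s, K t⟫| ≤ ‖Q s‖ * ‖K t‖ := abs_real_inner_le_norm _ _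
      _ ≤ (C_Q * ‖s‖) * (C_K * ‖t‖) := by gcongr; exacts [hQ s, hK t]
      _ = C_Q * C_K * (‖s‖ * ‖t‖) := by ring
  rw [hsplit, mul_add]
  exact (abs_add_le _ _).trans (add_le_add (hbound _ _) (hbound _ _))

theorem abs_exp_inner_map_sub_exp_inner_map_le {E F : Type*} [NormedAddCommGroup E]
    [NormedSpace ℝ E] [NormedAddCommGroup F] [InnerProductSpace ℝ F] (Q K : E →ₗ[ℝ] F)
    {C_Q C_K M δ₁ δ₂ : ℝ} (hCQ : 0 ≤ C_Q) (hCK : 0 ≤ C_K) (hQ : ∀ u, ‖Q u‖ ≤ C_Q * ‖u‖)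
    (hK : ∀ u, ‖K u‖ ≤ C_K * ‖u‖) {u u' v v' : E} (hu : ‖u‖ ≤ 1) (hv' : ‖v'‖ ≤ 1)
    (huu' : ‖u - u'‖ ≤ δ₁) (hvv' : ‖v - v'‖ ≤ δ₂) (hM : ⟪Q u, K v⟫ ≤ M) (hM' : ⟪Q u', K v'⟫ ≤ M) :
    |Real.exp ⟪Q u, K v⟫ - Real.exp ⟪Q u', K v'⟫| ≤ Real.exp M * (C_Q * C_K * (δ₁ + δ₂)) := by
  refine (abs_exp_sub_exp_le_exp_mul hM hM').trans ?_
  gcongr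
  refine (abs_inner_map_sub_inner_map_le Q K hCQ hQ hK _ _ _ _).trans
    (mul_le_mul_of_nonneg_left ?_ (mul_nonneg hCQ hCK))
  rw [add_comm δ₁]
  exact add_le_add ((mul_le_of_le_one_left (norm_nonneg _) hu).trans hvv')
    ((mul_le_of_le_one_right (norm_nonneg _) hv').trans huu')

theorem norm_sub_le_add_of_mem_closedBall {X E : Type*} [PseudoMetricSpace X]
    [SeminormedAddCommGroup E] {f : X → E} (hf : LipschitzWith 1 f) {z : E} {x y : X} {Δ r : ℝ}
    (hz : ‖z - f x‖ ≤ Δ) (hy : y ∈ Metric.closedBall x r) : ‖z - f y‖ ≤ Δ + r := by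
  have hfxy : dist (f x) (f y) ≤ r := by
    have hlip := hf.dist_le_mul x y
    rw [NNReal.coe_one, one_mul, dist_comm x] at hlip
    exact hlip.trans hy
  calc ‖z - f y‖ ≤ ‖z - f x‖ + ‖f x - f y‖ := norm_sub_le_norm_sub_add_norm_sub _ _ _
    _ ≤ Δ + r := add_le_add hz (by rwa [← dist_eq_norm])

section Normalization

variable {E : Type*} [NormedAddCommGroup E] [NormedSpace ℝ E]

theorem norm_inv_smul_sub_inv_smul_le {W I C : ℝ} (U J : E) (hW : 0 < W) (hI : 0 < I)
    (hJ : ‖J‖ ≤ C * I) :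
    ‖W⁻¹ • U - I⁻¹ • J‖ ≤ W⁻¹ * (‖U - J‖ + C * |I - W|) := by
  have hsplit : W⁻¹ • U - I⁻¹ • J = W⁻¹ • ((U - J) + ((I - W) / I) • J) := by
    have hcoef : W⁻¹ * ((I - W) / I) = W⁻¹ - I⁻¹ := by field_simp
    rw [smul_add, smul_smul, hcoef]
    module
  have hJI : |I - W| / I * ‖J‖ ≤ C * |I - W| := by
    rw [div_mul_eq_mul_div, div_le_iff₀ hI]
    nlinarith [abs_nonneg (I - W)]
  rw [hsplit, norm_smul, Real.norm_of_nonneg (inv_nonneg.2 hW.le)]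
  gcongr
  refine (norm_add_le _ _).trans (add_le_add_right ?_ _)
  rwa [norm_smul, Real.norm_eq_abs, abs_div, abs_of_pos hI]

theorem norm_smul_sub_smul_le (a b : ℝ) (v w : E) :
    ‖a • v - b • w‖ ≤ |a| * ‖v - w‖ + |a - b| * ‖w‖ := by
  have hsplit : a • v - b • w = a • (v - w) + (a - b) • w := by module
  rw [hsplit, ← Real.norm_eq_abs, ← Real.norm_eq_abs, ← norm_smul, ← norm_smul]
  exact norm_add_le _ _

theorem inv_sum_mul_smul_sum_smul_smul {ι : Type*} [Fintype ι] {t : ℝ} (ht : t ≠ 0)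
    (a : ι → ℝ) (v : ι → E) :
    (∑ j, t * a j)⁻¹ • ∑ j, t • a j • v j = (∑ j, a j)⁻¹ • ∑ j, a j • v j := by
  rw [← Finset.mul_sum, ← Finset.smul_sum, smul_smul, mul_inv_rev, inv_mul_cancel_right₀ ht]

end Normalization

section Partition

variable {X ι E : Type*} [MeasurableSpace X] {μ : Measure X} [Fintype ι] {P : ι → Set X}
  [NormedAddCommGroup E] [NormedSpace ℝ E] [CompleteSpace E]

theorem norm_sum_measureReal_smul_sub_integral_le [IsFiniteMeasure μ]
    (hPmeas : ∀ j, MeasurableSet (P j)) (hPdisj : Pairwise fun j k => Disjoint (P j) (P k))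
    (hPcover : ⋃ j, P j = Set.univ) {g : X → E} (hg : Integrable g μ) (c : ι → E) (ε : ι → ℝ)
    (hcg : ∀ j, ∀ y ∈ P j, ‖c j - g y‖ ≤ ε j) :
    ‖∑ j, μ.real (P j) • c j - ∫ y, g y ∂μ‖ ≤ ∑ j, ε j * μ.real (P j) := by
  have hsplit : ∫ y, g y ∂μ = ∑ j, ∫ y in P j, g y ∂μ := by
    rw [← setIntegral_univ, ← hPcover,
      integral_iUnion_fintype hPmeas hPdisj fun j => hg.integrableOn]
  have hcell : ∀ j, μ.real (P j) • c j - ∫ y in P j, g y ∂μ = ∫ y in P j, (c j - g y) ∂μ :=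
    fun j => by rw [integral_sub (integrable_const (c j)) hg.integrableOn,
      setIntegral_const]
  rw [hsplit, ← Finset.sum_sub_distrib]
  refine (norm_sum_le _ _).trans (Finset.sum_le_sum fun j _ => ?_)
  rw [hcell]
  exact norm_setIntegral_le_of_norm_le_const (measure_lt_top μ _) (hcg j)

theorem sum_measureReal_eq_one [IsProbabilityMeasure μ] (hPmeas : ∀ j, MeasurableSet (P j))
    (hPdisj : Pairwise fun j k => Disjoint (P j) (P k)) (hPcover : ⋃ j, P j = Set.univ) :
    ∑ j, μ.real (P j) = 1 := by
  rw [← measureReal_iUnion_fintype hPdisj hPmeas, hPcover, probReal_univ]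

theorem norm_inv_smul_sum_sub_inv_smul_integral_le [IsProbabilityMeasure μ]
    (hPmeas : ∀ j, MeasurableSet (P j)) (hPdisj : Pairwise fun j k => Disjoint (P j) (P k))
    (hPcover : ⋃ j, P j = Set.univ) {g : X → ℝ} {φ : X → E} {C m ε η : ℝ}
    (hg : Integrable g μ) (hgφ : Integrable (fun y => g y • φ y) μ) (hg0 : ∀ y, 0 ≤ g y)
    (hI : 0 < ∫ y, g y ∂μ) (hφ : ∀ y, ‖φ y‖ ≤ C) (a : ι → ℝ) (v : ι → E)
    (hm : 0 < m) (ha : ∀ j, m ≤ a j)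
    (hag : ∀ j, ∀ y ∈ P j, |a j - g y| ≤ ε) (hvφ : ∀ j, ∀ y ∈ P j, ‖v j - φ y‖ ≤ η) :
    ‖(∑ j, μ.real (P j) * a j)⁻¹ • ∑ j, μ.real (P j) • a j • v j -
        (∫ y, g y ∂μ)⁻¹ • ∫ y, g y • φ y ∂μ‖ ≤ η + 2 * C * ε / m := by
  set W := ∑ j, μ.real (P j) * a j
  have hmass := sum_measureReal_eq_one (μ := μ) hPmeas hPdisj hPcover
  obtain ⟨y₀⟩ : Nonempty X := nonempty_of_isProbabilityMeasure μ
  obtain ⟨j₀, hy₀⟩ := Set.mem_iUnion.1 (hPcover ▸ Set.mem_univ y₀)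
  have hC : 0 ≤ C := (norm_nonneg _).trans (hφ y₀)
  have hε : 0 ≤ ε := (abs_nonneg _).trans (hag j₀ y₀ hy₀)
  have hmW : m ≤ W := calc
    m = ∑ j, μ.real (P j) * m := by rw [← Finset.sum_mul, hmass, one_mul]
    _ ≤ W := Finset.sum_le_sum fun j _ => by gcongr; exact ha j
  have hWI : |∫ y, g y ∂μ - W| ≤ ε := by
    rw [abs_sub_comm, ← Real.norm_eq_abs]
    simpa only [smul_eq_mul, ← Finset.mul_sum, hmass, mul_one] using
      norm_sum_measureReal_smul_sub_integral_le hPmeas hPdisj hPcover hg a (fun _ => ε) hag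
  have hUJ : ‖∑ j, μ.real (P j) • a j • v j - ∫ y, g y • φ y ∂μ‖ ≤ W * η + ε * C := by
    refine (norm_sum_measureReal_smul_sub_integral_le hPmeas hPdisj hPcover hgφ
      (fun j => a j • v j) (fun j => a j * η + ε * C) fun j y hy => ?_).trans_eq ?_
    · have ha0 : 0 ≤ a j := hm.le.trans (ha j)
      refine (norm_smul_sub_smul_le _ _ _ _).trans ?_
      rw [abs_of_nonneg ha0]
      gcongr
      exacts [hvφ j y hy, hag j y hy, hφ y]
    · simp only [add_mul, Finset.sum_add_distrib, W, Finset.sum_mul]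
      rw [← Finset.mul_sum, hmass, mul_one]
      exact congrArg (· + ε * C) (Finset.sum_congr rfl fun j _ => by ring)
  have hJ : ‖∫ y, g y • φ y ∂μ‖ ≤ C * ∫ y, g y ∂μ := by
    rw [← integral_const_mul]
    refine norm_integral_le_of_norm_le (hg.const_mul C) (Filter.Eventually.of_forall fun y => ?_)
    rw [norm_smul, Real.norm_of_nonneg (hg0 y), mul_comm]
    exact mul_le_mul_of_nonneg_right (hφ y) (hg0 y)
  have hW : 0 < W := hm.trans_le hmW
  calc _ ≤ W⁻¹ * (‖∑ j, μ.real (P j) • a j • v j - ∫ y, g y • φ y ∂μ‖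
          + C * |∫ y, g y ∂μ - W|) := norm_inv_smul_sub_inv_smul_le _ _ hW hI hJ
    _ ≤ W⁻¹ * ((W * η + ε * C) + C * ε) := by gcongr
    _ = η + 2 * C * ε / W := by field_simp; ring
    _ ≤ η + 2 * C * ε / m := by gcongr

end Partition

theorem graph_transformer_to_manifold_transformer_pointwise_bound_general
    {D : ℕ} {X : Type*} [MetricSpace X] [MeasurableSpace X] [BorelSpace X]
    (μ : Measure X) [IsProbabilityMeasure μ]
    (Q K V : EuclideanSpace ℝ (Fin D) →ₗ[ℝ] EuclideanSpace ℝ (Fin D))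
    (C_Q C_K C_V Δ r : ℝ)
    (hCQ : 0 < C_Q) (hCK : 0 < C_K) (hCV : 0 < C_V) (hr : 0 < r)
    (hQ : ∀ u, ‖Q u‖ ≤ C_Q * ‖u‖) (hK : ∀ u, ‖K u‖ ≤ C_K * ‖u‖)
    (hV : ∀ u, ‖V u‖ ≤ C_V * ‖u‖)
    (f : X → EuclideanSpace ℝ (Fin D))
    (hfLip : ∀ a b, ‖f a - f b‖ ≤ dist a b)
    (hf1 : ∀ a : X, ‖f a‖ ≤ 1)
    (N : ℕ) (x : Fin N → X) (P : Fin N → Set X)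
    (hPmeas : ∀ j, MeasurableSet (P j))
    (hPdisj : Pairwise fun j k => Disjoint (P j) (P k))
    (hPcover : (⋃ j, P j) = Set.univ)
    (hPball : ∀ j, P j ⊆ Metric.closedBall (x j) r)
    (hPmass : ∀ j, μ (P j) = (N : ENNReal)⁻¹)
    (Xv : Fin N → EuclideanSpace ℝ (Fin D))
    (hXv : ∀ j, ‖Xv j - f (x j)‖ ≤ Δ) (hXv1 : ∀ j, ‖Xv j‖ ≤ 1)
    (M : ℝ) (hM0 : 0 ≤ M)
    (hM1 : ∀ i j, abs ⟪Q (Xv i), K (Xv j)⟫ ≤ M)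
    (hM2 : ∀ u v : X, abs ⟪Q (f u), K (f v)⟫ ≤ M)
    (i : Fin N) :
    ‖(∑ j, Real.exp ⟪Q (Xv i), K (Xv j)⟫)⁻¹ •
        (∑ j, Real.exp ⟪Q (Xv i), K (Xv j)⟫ • V (Xv j)) -
      (∫ y, Real.exp ⟪Q (f (x i)), K (f y)⟫ ∂μ)⁻¹ •
        (∫ y, Real.exp ⟪Q (f (x i)), K (f y)⟫ • V (f y) ∂μ)‖
      ≤ (C_V + 4 * Real.exp (2 * M) * C_Q * C_K * C_V) * Δ +
        (Real.exp M * C_V + 2 * Real.exp (2 * M) * C_Q * C_K * C_V) * r := by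
  have hf : LipschitzWith 1 f :=
    .of_dist_le_mul fun a b => by simpa [dist_eq_norm] using hfLip a b
  have hf_cont := hf.continuous
  have hK_cont := K.continuous_of_finiteDimensional
  have hV_cont := V.continuous_of_finiteDimensional
  have hg : Integrable (fun y => Real.exp ⟪Q (f (x i)), K (f y)⟫) μ :=
    .of_bound (by fun_prop) (Real.exp M) <| .of_forall fun y => by
      rw [Real.norm_of_nonneg (Real.exp_pos _).le]
      exact Real.exp_le_exp.2 (abs_le.1 (hM2 _ _)).2
  have hVf : ∀ y, ‖V (f y)‖ ≤ C_V := fun y =>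
    (hV _).trans (mul_le_of_le_one_right hCV.le (hf1 y))
  have hcell : ∀ j, ∀ y ∈ P j, ‖Xv j - f y‖ ≤ Δ + r := fun j y hy =>
    norm_sub_le_add_of_mem_closedBall hf (hXv j) (hPball j hy)
  have key := norm_inv_smul_sum_sub_inv_smul_integral_le hPmeas hPdisj hPcover hg
    (hg.smul_bdd C_V (by fun_prop) (.of_forall hVf)) (fun _ => (Real.exp_pos _).le)
    (integral_exp_pos hg) hVf _ (fun j => V (Xv j)) (Real.exp_pos (-M))
    (fun j => Real.exp_le_exp.2 (abs_le.1 (hM1 i j)).1)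
    (fun j y hy => abs_exp_inner_map_sub_exp_inner_map_le Q K hCQ.le hCK.le hQ hK (hXv1 i)
      (hf1 y) (hXv i) (hcell j y hy) (abs_le.1 (hM1 i j)).2 (abs_le.1 (hM2 _ y)).2)
    (fun j y hy => by
      rw [← map_sub]
      exact (hV _).trans (mul_le_mul_of_nonneg_left (hcell j y hy) hCV.le))
  have hmass : ∀ j, μ.real (P j) = (N : ℝ)⁻¹ := fun j => by simp [measureReal_def, hPmass]
  have hN : (N : ℝ)⁻¹ ≠ 0 := inv_ne_zero (Nat.cast_ne_zero.2 (Fin.pos i).ne')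
  -- the Riemann sums are the graph sums scaled by `N⁻¹`, which cancels in the ratio
  simp only [hmass, inv_sum_mul_smul_sum_smul_smul hN] at key
  refine key.trans ?_
  have hexp2 : Real.exp (2 * M) = Real.exp M * Real.exp M := by rw [← Real.exp_add, two_mul]
  rw [Real.exp_neg, div_inv_eq_mul, hexp2]
  linarith [mul_nonneg (mul_nonneg (sub_nonneg.2 (Real.one_le_exp hM0)) hCV.le) hr.le]

/-- deterministic form of Theorem 3.1: pointwise convergence of graph
transformers to manifold transformers. For a Borel probability measure `μ`, a partition
`P 1, …, P N` of `X` with `P j ⊆ closedBall (x j) r` and `μ (P j) = 1/N`, normalized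
manifold signal `‖f‖ ≤ 1`, positional encodings `Xv j` with `‖Xv j − f (x j)‖ ≤ Δ` and
`‖Xv j‖ ≤ 1`, and `M` bounding all attention inner products,
`‖Φ_G(i) − Φ_M(x i)‖ ≤ (C_V + 4·exp(2M)·C_Q·C_K·C_V)·Δ
                        + (exp(M)·C_V + 2·exp(2M)·C_Q·C_K·C_V)·r`. -/
theorem graph_transformer_to_manifold_transformer_pointwise_bound
    {D : ℕ} {X : Type*} [MetricSpace X] [MeasurableSpace X] [BorelSpace X]
    (μ : Measure X) [IsProbabilityMeasure μ]
    (Q K V : EuclideanSpace ℝ (Fin D) →ₗ[ℝ] EuclideanSpace ℝ (Fin D))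
    (C_Q C_K C_V Δ r : ℝ)
    (hCQ : 0 < C_Q) (hCK : 0 < C_K) (hCV : 0 < C_V) (hΔ : 0 ≤ Δ) (hr : 0 < r)
    (hQ : ∀ u, ‖Q u‖ ≤ C_Q * ‖u‖) (hK : ∀ u, ‖K u‖ ≤ C_K * ‖u‖)
    (hV : ∀ u, ‖V u‖ ≤ C_V * ‖u‖)
    (f : X → EuclideanSpace ℝ (Fin D))
    (hfLip : ∀ a b, ‖f a - f b‖ ≤ dist a b)
    (hf1 : ∀ a : X, ‖f a‖ ≤ 1)
    (N : ℕ) (x : Fin N → X) (P : Fin N → Set X)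
    (hPmeas : ∀ j, MeasurableSet (P j))
    (hPdisj : Pairwise fun j k => Disjoint (P j) (P k))
    (hPcover : (⋃ j, P j) = Set.univ)
    (hPball : ∀ j, P j ⊆ Metric.closedBall (x j) r)
    (hPmass : ∀ j, μ (P j) = (N : ENNReal)⁻¹)
    (Xv : Fin N → EuclideanSpace ℝ (Fin D))
    (hXv : ∀ j, ‖Xv j - f (x j)‖ ≤ Δ) (hXv1 : ∀ j, ‖Xv j‖ ≤ 1)
    (M : ℝ) (hM0 : 0 ≤ M)
    (hM1 : ∀ i j, abs ⟪Q (Xv i), K (Xv j)⟫ ≤ M)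
    (hM2 : ∀ u v : X, abs ⟪Q (f u), K (f v)⟫ ≤ M)
    (i : Fin N) :
    ‖(∑ j, Real.exp ⟪Q (Xv i), K (Xv j)⟫)⁻¹ •
        (∑ j, Real.exp ⟪Q (Xv i), K (Xv j)⟫ • V (Xv j)) -
      (∫ y, Real.exp ⟪Q (f (x i)), K (f y)⟫ ∂μ)⁻¹ •
        (∫ y, Real.exp ⟪Q (f (x i)), K (f y)⟫ • V (f y) ∂μ)‖
      ≤ (C_V + 4 * Real.exp (2 * M) * C_Q * C_K * C_V) * Δ +
        (Real.exp M * C_V + 2 * Real.exp (2 * M) * C_Q * C_K * C_V) * r :=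
  graph_transformer_to_manifold_transformer_pointwise_bound_general μ Q K V C_Q C_K C_V Δ r hCQ hCK
    hCV hr hQ hK hV f hfLip hf1 N x P hPmeas hPdisj hPcover hPball hPmass Xv hXv hXv1 M hM0 hM1 hM2
    i
end

section
/- (Local Lipschitz continuity of manifold attention.) Let μ be a Borel probability measure on X and let M ≥ 0 satisfy |⟨Q f(u), K f(v)⟩| ≤ M for all u, v ∈ X. Then for any two points x, x' ∈ X with dist(x, x') ≤ r, the manifold-transformer outputs satisfy ‖Φ_M(x) − Φ_M(x')‖ ≤ 2·exp(2M)·C_Q·C_K·C_V·B_f²·r. -/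
open MeasureTheory
open scoped RealInnerProductSpace BigOperators

private lemma exp_sub_exp_abs_le {M a b : ℝ} (ha : |a| ≤ M) (hb : |b| ≤ M) :
    |Real.exp a - Real.exp b| ≤ Real.exp M * |a - b| := by
  wlog h : b ≤ a generalizing a b
  · rw [abs_sub_comm, abs_sub_comm a b]; exact this hb ha (le_of_not_ge h)
  have h2 : 1 - Real.exp (b - a) ≤ a - b := by
    have := Real.add_one_le_exp (b - a); linarith
  have h4 : Real.exp a * (1 - Real.exp (b - a)) = Real.exp a - Real.exp b := by
    rw [mul_sub, mul_one, ← Real.exp_add]; ring_nf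
  have h5 : Real.exp a ≤ Real.exp M := Real.exp_le_exp.mpr ((abs_le.mp ha).2)
  have hba : Real.exp b ≤ Real.exp a := Real.exp_le_exp.mpr h
  rw [abs_of_nonneg (by linarith : (0:ℝ) ≤ Real.exp a - Real.exp b),
    abs_of_nonneg (by linarith : (0:ℝ) ≤ a - b)]
  nlinarith [Real.exp_pos a, Real.exp_pos b]

/-- local Lipschitz continuity of manifold attention: for a Borel
probability measure `μ`, `M ≥ 0` bounding all attention inner products, and points
`x, x'` with `dist x x' ≤ r`,
`‖Φ_M(x) − Φ_M(x')‖ ≤ 2·exp(2M)·C_Q·C_K·C_V·B_f²·r`. -/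
theorem manifold_attention_local_lipschitz
    {D : ℕ} {X : Type*} [MetricSpace X] [MeasurableSpace X] [BorelSpace X]
    (μ : Measure X) [IsProbabilityMeasure μ]
    (Q K V : EuclideanSpace ℝ (Fin D) →ₗ[ℝ] EuclideanSpace ℝ (Fin D))
    (C_Q C_K C_V B_f r : ℝ)
    (hCQ : 0 < C_Q) (hCK : 0 < C_K) (hCV : 0 < C_V) (hBf : 0 < B_f)
    (hQ : ∀ u, ‖Q u‖ ≤ C_Q * ‖u‖) (hK : ∀ u, ‖K u‖ ≤ C_K * ‖u‖)
    (hV : ∀ u, ‖V u‖ ≤ C_V * ‖u‖)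
    (f : X → EuclideanSpace ℝ (Fin D))
    (hfLip : ∀ a b, ‖f a - f b‖ ≤ dist a b)
    (hfB : ∀ x, ‖f x‖ ≤ B_f)
    (M : ℝ) (hM0 : 0 ≤ M)
    (hM : ∀ u v : X, abs ⟪Q (f u), K (f v)⟫ ≤ M)
    (x x' : X) (hxx' : dist x x' ≤ r) :
    ‖(∫ y, Real.exp ⟪Q (f x), K (f y)⟫ ∂μ)⁻¹ •
        (∫ y, Real.exp ⟪Q (f x), K (f y)⟫ • V (f y) ∂μ) -
      (∫ y, Real.exp ⟪Q (f x'), K (f y)⟫ ∂μ)⁻¹ •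
        (∫ y, Real.exp ⟪Q (f x'), K (f y)⟫ • V (f y) ∂μ)‖
      ≤ 2 * Real.exp (2 * M) * C_Q * C_K * C_V * B_f ^ 2 * r := by
  have hr0 : 0 ≤ r := le_trans dist_nonneg hxx'
  -- continuity
  have hfc : Continuous f := by
    refine (LipschitzWith.of_dist_le_mul (K := 1) fun a b => ?_).continuous
    rw [dist_eq_norm]; simpa using hfLip a b
  have hQc : Continuous Q := Q.continuous_of_finiteDimensional
  have hKc : Continuous K := K.continuous_of_finiteDimensional
  have hVc : Continuous V := V.continuous_of_finiteDimensional
  set g : X → X → ℝ := fun p y => Real.exp ⟪Q (f p), K (f y)⟫ with hg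
  have hcont : ∀ p, Continuous fun y => g p y := fun p =>
    Real.continuous_exp.comp (continuous_const.inner (hKc.comp hfc))
  have hgpos : ∀ p y, 0 < g p y := fun p y => Real.exp_pos _
  have hgub : ∀ p y, g p y ≤ Real.exp M := fun p y =>
    Real.exp_le_exp.mpr ((abs_le.mp (hM p y)).2)
  have hglb : ∀ p y, Real.exp (-M) ≤ g p y := fun p y =>
    Real.exp_le_exp.mpr (neg_le_of_abs_le (hM p y))
  have hgint : ∀ p, Integrable (fun y => g p y) μ := fun p => by
    refine (integrable_const (Real.exp M)).mono' (hcont p).aestronglyMeasurable ?_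
    filter_upwards with y
    rw [Real.norm_eq_abs, abs_of_pos (hgpos p y)]
    exact hgub p y
  have hVfB : ∀ y : X, ‖V (f y)‖ ≤ C_V * B_f := fun y =>
    (hV (f y)).trans (mul_le_mul_of_nonneg_left (hfB y) hCV.le)
  have hVint : ∀ p, Integrable (fun y => g p y • V (f y)) μ := fun p => by
    refine (integrable_const (Real.exp M * (C_V * B_f))).mono'
      ((hcont p).smul (hVc.comp hfc)).aestronglyMeasurable ?_
    filter_upwards with y
    rw [norm_smul, Real.norm_eq_abs, abs_of_pos (hgpos p y)]
    exact mul_le_mul (hgub p y) (hVfB y) (norm_nonneg _) (Real.exp_pos M).le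
  set Z : X → ℝ := fun p => ∫ y, g p y ∂μ with hZ
  set N : X → EuclideanSpace ℝ (Fin D) := fun p => ∫ y, g p y • V (f y) ∂μ with hN
  have hZlb : ∀ p, Real.exp (-M) ≤ Z p := fun p => by
    have : Real.exp (-M) = ∫ _, Real.exp (-M) ∂μ := by simp
    rw [this]
    exact integral_mono (integrable_const _) (hgint p) fun y => hglb p y
  have hZub : ∀ p, Z p ≤ Real.exp M := fun p => by
    have : Real.exp M = ∫ _, Real.exp M ∂μ := by simp
    rw [this]
    exact integral_mono (hgint p) (integrable_const _) fun y => hgub p y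
  have hZpos : ∀ p, 0 < Z p := fun p => lt_of_lt_of_le (Real.exp_pos _) (hZlb p)
  have hZinv : ∀ p, (Z p)⁻¹ ≤ Real.exp M := fun p => by
    have := inv_anti₀ (Real.exp_pos (-M)) (hZlb p)
    rwa [Real.exp_neg, inv_inv] at this
  have hNb : ∀ p, ‖N p‖ ≤ C_V * B_f * Z p := fun p => by
    refine (norm_integral_le_integral_norm _).trans ?_
    have : C_V * B_f * Z p = ∫ y, g p y * (C_V * B_f) ∂μ := by
      simp only [hZ]; rw [integral_mul_const]; ring
    rw [this]
    refine integral_mono (hVint p).norm ((hgint p).mul_const _) fun y => ?_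
    rw [norm_smul, Real.norm_eq_abs, abs_of_pos (hgpos p y)]
    exact mul_le_mul_of_nonneg_left (hVfB y) (hgpos p y).le
  -- pointwise bound on difference of weights
  set E : ℝ := Real.exp M * (C_Q * (C_K * B_f) * r) with hE
  have hE0 : 0 ≤ E := by positivity
  have hpt : ∀ y, |g x y - g x' y| ≤ E := fun y => by
    have h1 : |⟪Q (f x), K (f y)⟫ - ⟪Q (f x'), K (f y)⟫| ≤ C_Q * (C_K * B_f) * r := by
      have e1 : ⟪Q (f x), K (f y)⟫ - ⟪Q (f x'), K (f y)⟫ = ⟪Q (f x - f x'), K (f y)⟫ := by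
        rw [map_sub, inner_sub_left]
      rw [e1]
      refine (abs_real_inner_le_norm _ _).trans ?_
      have hq : ‖Q (f x - f x')‖ ≤ C_Q * r :=
        (hQ _).trans (mul_le_mul_of_nonneg_left ((hfLip x x').trans hxx') hCQ.le)
      have hk : ‖K (f y)‖ ≤ C_K * B_f :=
        (hK _).trans (mul_le_mul_of_nonneg_left (hfB y) hCK.le)
      calc ‖Q (f x - f x')‖ * ‖K (f y)‖ ≤ (C_Q * r) * (C_K * B_f) :=
            mul_le_mul hq hk (norm_nonneg _) (by positivity)
        _ = C_Q * (C_K * B_f) * r := by ring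
    calc |g x y - g x' y| ≤ Real.exp M * |⟪Q (f x), K (f y)⟫ - ⟪Q (f x'), K (f y)⟫| :=
          exp_sub_exp_abs_le (hM x y) (hM x' y)
      _ ≤ E := by rw [hE]; exact mul_le_mul_of_nonneg_left h1 (Real.exp_pos M).le
  -- difference of normalizers
  have hZdiff : |Z x - Z x'| ≤ E := by
    rw [hZ]
    simp only
    rw [← integral_sub (hgint x) (hgint x'), ← Real.norm_eq_abs]
    refine (norm_integral_le_integral_norm _).trans ?_
    have : E = ∫ _, E ∂μ := by simp
    rw [this]
    exact integral_mono ((hgint x).sub (hgint x')).norm (integrable_const _)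
      fun y => hpt y
  -- difference of numerators
  have hNdiff : ‖N x - N x'‖ ≤ E * (C_V * B_f) := by
    rw [hN]
    simp only
    rw [← integral_sub (hVint x) (hVint x')]
    refine (norm_integral_le_integral_norm _).trans ?_
    have : E * (C_V * B_f) = ∫ _, E * (C_V * B_f) ∂μ := by simp
    rw [this]
    refine integral_mono ((hVint x).sub (hVint x')).norm (integrable_const _) fun y => ?_
    have : g x y • V (f y) - g x' y • V (f y) = (g x y - g x' y) • V (f y) := by
      rw [sub_smul]
    rw [this, norm_smul, Real.norm_eq_abs]
    exact mul_le_mul (hpt y) (hVfB y) (norm_nonneg _) hE0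
  -- decomposition
  have hdecomp : (Z x)⁻¹ • N x - (Z x')⁻¹ • N x' =
      (Z x)⁻¹ • (N x - N x') + ((Z x)⁻¹ - (Z x')⁻¹) • N x' := by
    rw [smul_sub, sub_smul]; abel
  have key : ‖(Z x)⁻¹ • N x - (Z x')⁻¹ • N x'‖ ≤
      Real.exp M * (E * (C_V * B_f)) + Real.exp M * E * (C_V * B_f) := by
    rw [hdecomp]
    refine (norm_add_le _ _).trans (add_le_add ?_ ?_)
    · rw [norm_smul, Real.norm_eq_abs, abs_of_pos (inv_pos.mpr (hZpos x))]
      exact mul_le_mul (hZinv x) hNdiff (norm_nonneg _) (Real.exp_pos M).le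
    · rw [norm_smul, Real.norm_eq_abs]
      have e1 : (Z x)⁻¹ - (Z x')⁻¹ = (Z x)⁻¹ * (Z x' - Z x) * (Z x')⁻¹ := by
        rw [inv_sub_inv (hZpos x).ne' (hZpos x').ne', div_eq_mul_inv, mul_inv]
        ring
      rw [e1, abs_mul, abs_mul, abs_of_pos (inv_pos.mpr (hZpos x)),
        abs_of_pos (inv_pos.mpr (hZpos x'))]
      have h2 : |Z x' - Z x| ≤ E := by rw [abs_sub_comm]; exact hZdiff
      have h3 : (Z x')⁻¹ * ‖N x'‖ ≤ C_V * B_f := by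
        rw [inv_mul_le_iff₀ (hZpos x')]
        calc ‖N x'‖ ≤ C_V * B_f * Z x' := hNb x'
          _ = Z x' * (C_V * B_f) := by ring
      calc (Z x)⁻¹ * |Z x' - Z x| * (Z x')⁻¹ * ‖N x'‖
          = ((Z x)⁻¹ * |Z x' - Z x|) * ((Z x')⁻¹ * ‖N x'‖) := by ring
        _ ≤ (Real.exp M * E) * (C_V * B_f) := by
            refine mul_le_mul (mul_le_mul (hZinv x) h2 (abs_nonneg _)
              (Real.exp_pos M).le) h3 ?_ (by positivity)
            exact mul_nonneg (inv_pos.mpr (hZpos x')).le (norm_nonneg _)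
        _ = Real.exp M * E * (C_V * B_f) := by ring
  refine key.trans ?_
  have he2 : Real.exp (2 * M) = Real.exp M * Real.exp M := by
    rw [← Real.exp_add]; ring_nf
  rw [he2, hE]
  nlinarith [Real.exp_pos M, sq_nonneg B_f]
end
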